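/- Let g be a 3-Lie algebra and N a Nijenhuis operator. Then N^j and N^k are compatible Nijenhuis operators for any j, k ≥ 1, i.e. N^j + N^k is a Nijenhuis operator. -/
import Mathlib


/-- Deformation of a trilinear bracket `μ` by a linear operator `M`:
`μ_M(x₁,x₂,x₃) = μ(Mx₁,x₂,x₃) + μ(x₁,Mx₂,x₃) + μ(x₁,x₂,Mx₃) − M μ(x₁,x₂,x₃)`. -/
def deform {K : Type*} [Field K] {g : Type*} [AddCommGroup g] [Module K g]
    (M : Module.End K g) (μ : g → g → g → g) : g → g → g → g :=
  fun x y z => μ (M x) y z + μ x (M y) z + μ x y (M z) - M (μ x y z)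

/-- `N` is a Nijenhuis operator for the 3-Lie bracket `b`: conditions (17) and (15). -/
def IsNijenhuis {K : Type*} [Field K] {g : Type*} [AddCommGroup g] [Module K g]
    (b : g →ₗ[K] g →ₗ[K] g →ₗ[K] g) (N : Module.End K g) : Prop :=
  (∀ x y z, N (deform N (fun u v w => b u v w) x y z)
      = b (N x) (N y) z + b (N x) y (N z) + b x (N y) (N z))
  ∧ (∀ x y z, b (N x) (N y) (N z) = 0)

private lemma combine1 {α : Type*} [AddCommGroup α] {a1 b1 c d : α} (h1 : a1 = b1)
    (h : c - d = a1 - b1) : c = d := by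
  rw [h1, sub_self] at h; exact sub_eq_zero.mp h

private lemma combine2 {α : Type*} [AddCommGroup α] {a1 b1 a2 b2 c d : α}
    (h1 : a1 = b1) (h2 : a2 = b2)
    (h : c - d = a1 - b1 + (a2 - b2)) : c = d := by
  simp only [h1, h2, sub_self, add_zero, zero_add] at h; exact sub_eq_zero.mp h

private lemma combine3 {α : Type*} [AddCommGroup α] {a1 b1 a2 b2 a3 b3 c d : α}
    (h1 : a1 = b1) (h2 : a2 = b2) (h3 : a3 = b3)
    (h : c - d = a1 - b1 + (a2 - b2) + (a3 - b3)) : c = d := by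
  simp only [h1, h2, h3, sub_self, add_zero, zero_add] at h; exact sub_eq_zero.mp h

private lemma combine4 {α : Type*} [AddCommGroup α] {a1 b1 a2 b2 a3 b3 a4 b4 c d : α}
    (h1 : a1 = b1) (h2 : a2 = b2) (h3 : a3 = b3) (h4 : a4 = b4)
    (h : c - d = a1 - b1 + (a2 - b2) + (a3 - b3) + (a4 - b4)) : c = d := by
  simp only [h1, h2, h3, h4, sub_self, add_zero, zero_add] at h; exact sub_eq_zero.mp h

private lemma combine6 {α : Type*} [AddCommGroup α]
    {a1 b1 a2 b2 a3 b3 a4 b4 a5 b5 a6 b6 c d : α}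
    (h1 : a1 = b1) (h2 : a2 = b2) (h3 : a3 = b3) (h4 : a4 = b4) (h5 : a5 = b5) (h6 : a6 = b6)
    (h : c - d = a1 - b1 + (a2 - b2) + (a3 - b3) + (a4 - b4) + (a5 - b5) + (a6 - b6)) :
    c = d := by
  simp only [h1, h2, h3, h4, h5, h6, sub_self, add_zero, zero_add] at h
  exact sub_eq_zero.mp h

section aux
variable {K : Type*} [Field K] {g : Type*} [AddCommGroup g] [Module K g]
variable (br : g →ₗ[K] g →ₗ[K] g →ₗ[K] g) (N : Module.End K g)

private lemma hpow (n : ℕ) (w : g) : (N^(n+1)) w = N ((N^n) w) := by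
  rw [pow_succ']; rfl

private lemma hpow2 (n : ℕ) (w : g) : (N^n) (N w) = N ((N^n) w) := by
  rw [← Module.End.mul_apply, ← pow_succ, pow_succ']; rfl

private def UU (p : ℕ) (x y z : g) : g :=
  br ((N^p) x) y z + br x ((N^p) y) z + br x y ((N^p) z)

private def VV (p q : ℕ) (x y z : g) : g :=
  br ((N^p) x) ((N^q) y) z + br ((N^q) x) ((N^p) y) z + br ((N^p) x) y ((N^q) z)
    + br ((N^q) x) y ((N^p) z) + br x ((N^p) y) ((N^q) z) + br x ((N^q) y) ((N^p) z)

private def WW (p : ℕ) (x y z : g) : g :=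
  br ((N^p) x) ((N^p) y) z + br ((N^p) x) y ((N^p) z) + br x ((N^p) y) ((N^p) z)

private def Gst (p q : ℕ) : Prop := ∀ x y z : g,
  (N^p) (UU br N q x y z) + (N^q) (UU br N p x y z)
    - (N^p) ((N^q) (br x y z)) - (N^q) ((N^p) (br x y z)) = VV br N p q x y z

private lemma Ilem
    (hN1 : ∀ x y z : g, N (br (N x) y z + br x (N y) z + br x y (N z) - N (br x y z))
      = br (N x) (N y) z + br (N x) y (N z) + br x (N y) (N z))
    (a c d : ℕ) (x y z : g) :
    N (br (N ((N^a) x)) ((N^c) y) ((N^d) z)) + N (br ((N^a) x) (N ((N^c) y)) ((N^d) z))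
      + N (br ((N^a) x) ((N^c) y) (N ((N^d) z)))
      - N (N (br ((N^a) x) ((N^c) y) ((N^d) z)))
    = br (N ((N^a) x)) (N ((N^c) y)) ((N^d) z) + br (N ((N^a) x)) ((N^c) y) (N ((N^d) z))
      + br ((N^a) x) (N ((N^c) y)) (N ((N^d) z)) := by
  simpa only [map_add, map_sub] using hN1 ((N^a) x) ((N^c) y) ((N^d) z)

-- base case G(1,1)
variable (hN1 : ∀ x y z : g, N (br (N x) y z + br x (N y) z + br x y (N z) - N (br x y z))
      = br (N x) (N y) z + br (N x) y (N z) + br x (N y) (N z))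
variable (hN2 : ∀ x y z : g, br (N x) (N y) (N z) = 0)
set_option linter.unusedSectionVars false
include hN1 hN2

private lemma Gbase : Gst br N 1 1 := by
  intro x y z
  exact combine2 (Ilem br N hN1 0 0 0 x y z) (Ilem br N hN1 0 0 0 x y z)
    (by simp only [UU, VV, map_add, map_sub, hpow, hpow2, pow_zero, pow_one,
          Module.End.one_apply, hN2, map_zero, add_zero, zero_add]; abel)

-- edge recursion C
private lemma Cs (p : ℕ) (x y z : g) :
    N (UU br N (p+2) x y z) + N (VV br N (p+1) 1 x y z) - N (N (UU br N (p+1) x y z))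
      = VV br N (p+2) 1 x y z := by
  exact combine3 (Ilem br N hN1 (p+1) 0 0 x y z) (Ilem br N hN1 0 (p+1) 0 x y z)
    (Ilem br N hN1 0 0 (p+1) x y z)
    (by simp only [UU, VV, map_add, map_sub, hpow, hpow2, pow_zero, pow_one,
          Module.End.one_apply, hN2, map_zero, add_zero, zero_add]; abel)


-- interior recursion D
private lemma Ds (p q : ℕ) (x y z : g) :
    N (VV br N (p+2) (q+1) x y z) + N (VV br N (p+1) (q+2) x y z)
      - N (N (VV br N (p+1) (q+1) x y z)) = VV br N (p+2) (q+2) x y z := by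
  exact combine6 (Ilem br N hN1 (p+1) (q+1) 0 x y z) (Ilem br N hN1 (q+1) (p+1) 0 x y z)
    (Ilem br N hN1 (p+1) 0 (q+1) x y z) (Ilem br N hN1 (q+1) 0 (p+1) x y z)
    (Ilem br N hN1 0 (p+1) (q+1) x y z) (Ilem br N hN1 0 (q+1) (p+1) x y z)
    (by simp only [UU, VV, map_add, map_sub, hpow, hpow2, pow_zero, pow_one,
          Module.End.one_apply, hN2, map_zero, add_zero, zero_add]; abel)

-- diagonal recursion
private lemma Ddiags (p : ℕ) (x y z : g) :
    N (VV br N (p+2) (p+1) x y z) - N (N (WW br N (p+1) x y z)) = WW br N (p+2) x y z := by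
  exact combine3 (Ilem br N hN1 (p+1) (p+1) 0 x y z) (Ilem br N hN1 (p+1) 0 (p+1) x y z)
    (Ilem br N hN1 0 (p+1) (p+1) x y z)
    (by simp only [UU, VV, WW, map_add, map_sub, hpow, hpow2, pow_zero, pow_one,
          Module.End.one_apply, hN2, map_zero, add_zero, zero_add]; abel)

omit hN1 hN2 in
private lemma Gsymm (p q : ℕ) (h : Gst br N p q) : Gst br N q p := by
  intro x y z
  exact combine1 (h x y z)
    (by simp only [UU, VV, map_add, map_sub, hpow, hpow2, pow_zero, pow_one,
          Module.End.one_apply, map_zero, add_zero, zero_add]; abel)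

private lemma Gedge : ∀ p : ℕ, Gst br N (p+1) 1 := by
  intro p
  induction p with
  | zero => exact Gbase br N hN1 hN2
  | succ p ih =>
    intro x y z
    exact combine2 (Cs br N hN1 hN2 p x y z) (congrArg (⇑N) (ih x y z))
      (by simp only [UU, VV, map_add, map_sub, hpow, hpow2, pow_zero, pow_one,
            Module.End.one_apply, hN2, map_zero, add_zero, zero_add]; abel)

private lemma Gs : ∀ q p : ℕ, Gst br N (p+1) (q+1) := by
  intro q
  induction q with
  | zero => exact fun p => Gedge br N hN1 hN2 p
  | succ q ihq =>
    intro p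
    induction p with
    | zero => exact Gsymm br N (q+2) 1 (Gedge br N hN1 hN2 (q+1))
    | succ p ihp =>
      intro x y z
      exact combine4 (Ds br N hN1 hN2 p q x y z)
        (congrArg (⇑N) (ihq (p+1) x y z))
        (congrArg (⇑N) (ihp x y z))
        ((congrArg (fun w => N (N w)) (ihq p x y z)).symm)
        (by simp only [UU, VV, map_add, map_sub, hpow, hpow2, pow_zero, pow_one,
              Module.End.one_apply, hN2, map_zero, add_zero, zero_add]; abel)

private lemma Dgs : ∀ p : ℕ, ∀ x y z : g,
    (N^(p+1)) (UU br N (p+1) x y z) - (N^(p+1)) ((N^(p+1)) (br x y z))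
      = WW br N (p+1) x y z := by
  intro p
  induction p with
  | zero =>
    intro x y z
    exact combine1 (Ilem br N hN1 0 0 0 x y z)
      (by simp only [UU, WW, map_add, map_sub, hpow, hpow2, pow_zero, pow_one,
            Module.End.one_apply, map_zero, add_zero, zero_add]; try abel)
  | succ p ih =>
    intro x y z
    exact combine3 (Ddiags br N hN1 hN2 p x y z)
      (congrArg (⇑N) (Gs br N hN1 hN2 p (p+1) x y z))
      ((congrArg (fun w => N (N w)) (ih x y z)).symm)
      (by simp only [UU, VV, WW, map_add, map_sub, hpow, hpow2, pow_zero, pow_one,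
            Module.End.one_apply, hN2, map_zero, add_zero, zero_add]; abel)

end aux

/-- Theorem 4.8: for a Nijenhuis operator `N`, the powers `N^j` and `N^k`
are compatible for any `j, k ≥ 1`, i.e. `N^j + N^k` is a Nijenhuis operator. -/
theorem threeLie_nijenhuis_powers_compatible
    {K : Type*} [Field K] {g : Type*} [AddCommGroup g] [Module K g]
    (b : g →ₗ[K] g →ₗ[K] g →ₗ[K] g)
    (hb1 : ∀ x y z, b x y z = - b y x z)
    (hb2 : ∀ x y z, b x y z = - b x z y)
    (hfi : ∀ x₁ x₂ y₁ y₂ y₃, b x₁ x₂ (b y₁ y₂ y₃)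
      = b (b x₁ x₂ y₁) y₂ y₃ + b y₁ (b x₁ x₂ y₂) y₃ + b y₁ y₂ (b x₁ x₂ y₃))
    (N : Module.End K g) (hN : IsNijenhuis b N) :
    ∀ (j k : ℕ), 1 ≤ j → 1 ≤ k → IsNijenhuis b (N ^ j + N ^ k) := by
  intro j k hj hk
  obtain ⟨j, rfl⟩ : ∃ m, j = m + 1 := ⟨j - 1, by omega⟩
  obtain ⟨k, rfl⟩ : ∃ m, k = m + 1 := ⟨k - 1, by omega⟩
  have hN1 : ∀ x y z : g, N (b (N x) y z + b x (N y) z + b x y (N z) - N (b x y z))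
      = b (N x) (N y) z + b (N x) y (N z) + b x (N y) (N z) := by
    intro x y z
    have h := hN.1 x y z
    simpa only [deform] using h
  have hN2 := hN.2
  constructor
  · intro x y z
    simp only [deform]
    exact combine3 (Dgs b N hN1 hN2 j x y z) (Gs b N hN1 hN2 k j x y z)
      (Dgs b N hN1 hN2 k x y z)
      (by simp only [UU, VV, WW, LinearMap.add_apply, map_add, map_sub, hpow, hpow2,
            pow_zero, pow_one, Module.End.one_apply, hN2, map_zero, add_zero, zero_add]
          abel)
  · intro x y z
    simp only [LinearMap.add_apply, map_add, hpow, hN2, map_zero, add_zero, zero_add]
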